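/- Corollary 1: if y' ≠ y* and for every sequence x compatible with y*, ΔG(x, y') ≤ ΔG(x, y*) where compatibility of pairs is required for a structure to be in the ensemble of x, and structures in the ensemble of x are exactly the pseudoknot-free matchings whose pairs are Watson-Crick/wobble compatible with x, then every pair of y' must also be a pair of y* (pairs(y') ⊆ pairs(y*)), hence pairs(y') ⊊ pairs(y*). -/
import Mathlib


inductive Nucleotide | A | C | G | U
deriving DecidableEq

/-- Watson–Crick / wobble pairs. -/
def canPair : Nucleotide → Nucleotide → Prop
  | Nucleotide.C, Nucleotide.G => True
  | Nucleotide.G, Nucleotide.C => True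
  | Nucleotide.A, Nucleotide.U => True
  | Nucleotide.U, Nucleotide.A => True
  | Nucleotide.G, Nucleotide.U => True
  | Nucleotide.U, Nucleotide.G => True
  | _, _ => False

/-- `x` is compatible with a structure given by its pair set `P`. -/
def Compatible {n : ℕ} (x : Fin n → Nucleotide) (P : Set (Fin n × Fin n)) : Prop :=
  ∀ p ∈ P, canPair (x p.1) (x p.2)

/-- Corollary 1: if every sequence compatible with y* is also compatible with y'
(as is forced when y' is a rival always in the ensemble), and incompatibility
can be created for any pair not in pairs(y*), then pairs(y') ⊊ pairs(y*). -/
theorem stmt_4 {n : ℕ}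
    (Pstar P' : Set (Fin n × Fin n))   -- pairs(y*) and pairs(y')
    (hne : P' ≠ Pstar)
    -- every x compatible with y* has y' in its ensemble, i.e. is compatible with y'
    (hcompat : ∀ x : Fin n → Nucleotide, Compatible x Pstar → Compatible x P')
    -- richness: any pair not in pairs(y*) can be made non-matchable by some
    -- sequence compatible with y*
    (hsep : ∀ p : Fin n × Fin n, p ∉ Pstar →
        ∃ x : Fin n → Nucleotide, Compatible x Pstar ∧ ¬ canPair (x p.1) (x p.2)) :
    P' ⊂ Pstar := by
  refine ssubset_of_ne_of_subset hne ?_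
  intro p hp
  by_contra h
  obtain ⟨x, hx, hnp⟩ := hsep p h
  exact hnp (hcompat x hx p hp)
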